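/- arXiv:1501.04673 — 2 statements merged into one kernel-verified Lean document; each statement's English description precedes it below -/
import Mathlib

section
/- Let Ω_s ⊂ ℂ² (s ∈ [0,1]) be a family of strictly pseudoconvex domains with defining functions ρ_s, where the family s ↦ ρ_s is continuous in s. Let φ_s : Δ → ℂ² be a continuous family of nonconstant holomorphic maps, each extending continuously to Δ̄, and set D_s := φ_s(Δ). Suppose the boundary curves satisfy φ_s(∂Δ) ⊂ ∂Ω_s for every s ∈ [0,1], and D_s ⊂ Ω_s for every s ∈ [0,1). Then D₁ ⊂ Ω₁. -/
open Set Metric Complex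

noncomputable section

/-- Multiplication by `i` on `ℂ²`. -/
def iSmul (v : ℂ × ℂ) : ℂ × ℂ := (Complex.I * v.1, Complex.I * v.2)

/-- The Euclidean (real) inner product on `ℂ² ≅ ℝ⁴`. -/
def rInner (u v : ℂ × ℂ) : ℝ :=
  (u.1 * (starRingEnd ℂ) v.1 + u.2 * (starRingEnd ℂ) v.2).re

/-- The Euclidean norm on `ℂ² ≅ ℝ⁴`. -/
def rNorm (u : ℂ × ℂ) : ℝ := Real.sqrt (rInner u u)

/-- The Laplacian of a function `f : ℂ → ℝ` at `w`. -/
def lap (f : ℂ → ℝ) (w : ℂ) : ℝ :=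
  iteratedFDeriv ℝ 2 f w ![1, 1] + iteratedFDeriv ℝ 2 f w ![Complex.I, Complex.I]

/-- Restriction of `u : ℂ² → ℝ` to the complex line through `z` in direction `v`. -/
def lineRestr (u : ℂ × ℂ → ℝ) (z v : ℂ × ℂ) : ℂ → ℝ :=
  fun t => u (z + (t * v.1, t * v.2))

/-- `u` is smooth and strictly plurisubharmonic on `U`: its restriction to every complex
line is strictly subharmonic (positive Laplacian). -/
def StrictPSHOn (u : ℂ × ℂ → ℝ) (U : Set (ℂ × ℂ)) : Prop :=
  ContDiffOn ℝ (⊤ : ℕ∞) u U ∧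
    ∀ z ∈ U, ∀ v : ℂ × ℂ, v ≠ 0 → 0 < lap (lineRestr u z v) 0

/-- `Ω` is a bounded strictly pseudoconvex domain with defining function `ρ`: `ρ` is
smooth and strictly plurisubharmonic on a neighborhood `U` of `closure Ω` and
`Ω = {z ∈ U | ρ z < 0}`. -/
def IsStrictPseudoconvexWith (Ω : Set (ℂ × ℂ)) (ρ : ℂ × ℂ → ℝ) : Prop :=
  IsOpen Ω ∧ Ω.Nonempty ∧ Bornology.IsBounded Ω ∧
    ∃ U : Set (ℂ × ℂ), IsOpen U ∧ closure Ω ⊆ U ∧ StrictPSHOn ρ U ∧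
      Ω = {z ∈ U | ρ z < 0}

/-!
For `z` in the unit disc `D`, `ρ_s (φ_s z) < 0` for `s < 1`, so `u := ρ₁ ∘ φ₁ ≤ 0` on `D`. Wherever
`φ₁` lands in the neighbourhood `U` of `Ω̄₁` on which `ρ₁` is strictly plurisubharmonic, `Δu z` is
the Laplacian of `ρ₁` along the complex line through `φ₁ z` in direction `φ₁' z`; hence `Δu ≥ 0`,
and `Δu > 0` off the discrete zero set of `φ₁'`. Such a `u` has no local maximum: near a maximum
`z₀`, `u < u z₀` on a small circle (a maximum on it would sit where `Δu > 0`), so after adding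
`ε |z - z₀|²` the maximum over the closed small disc is interior, where the Laplacian is positive.
Therefore `u < 0`, i.e. `φ₁ z ∈ Ω₁`, whenever `φ₁ z ∈ Ω̄₁`, so `φ₁⁻¹ Ω₁` is open and closed in
`D`; it is nonempty since `φ₁ (∂D) ⊆ ∂Ω₁ ⊆ U`.
-/

open Filter Topology Laplacian InnerProductSpace

theorem IsLocalMax.deriv_deriv_nonpos {g : ℝ → ℝ} {x : ℝ} (h : IsLocalMax g x)
    (hg : ContinuousAt g x) : deriv (deriv g) x ≤ 0 := by
  by_contra! hpos
  have hconst : g =ᶠ[𝓝 x] fun _ => g x :=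
    ((isLocalMin_of_deriv_deriv_pos hpos h.deriv_eq_zero hg).and h).mono
      fun y hy => le_antisymm hy.2 hy.1
  have hzero : deriv (deriv g) x = 0 := by
    rw [hconst.deriv.deriv_eq]
    simp
  exact hpos.ne' hzero

theorem IsLocalMax.fderiv_fderiv_apply_self_nonpos {E : Type*} [NormedAddCommGroup E]
    [NormedSpace ℝ E] {u : E → ℝ} {w : E} (h : IsLocalMax u w) (hu : ContDiffAt ℝ 2 u w)
    (a : E) : fderiv ℝ (fderiv ℝ u) w a a ≤ 0 := by
  have hline : ∀ t : ℝ, HasDerivAt (fun s : ℝ => w + s • a) a t := fun t => by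
    simpa using ((hasDerivAt_id t).smul_const a).const_add w
  have hderiv : deriv (fun t : ℝ => u (w + t • a)) =ᶠ[𝓝 0]
      fun t => fderiv ℝ u (w + t • a) a := by
    have hcont : Tendsto (fun t : ℝ => w + t • a) (𝓝 0) (𝓝 w) := by
      simpa using (hline 0).continuousAt.tendsto
    filter_upwards [hcont.eventually (hu.eventually (by simp))] with t ht
    exact ((ht.differentiableAt (by simp)).hasFDerivAt.comp_hasDerivAt t (hline t)).deriv
  have hsecond : HasDerivAt (fun t : ℝ => fderiv ℝ u (w + t • a) a)
      (fderiv ℝ (fderiv ℝ u) w a a) 0 := by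
    have hd : DifferentiableAt ℝ (fderiv ℝ u) w :=
      (hu.fderiv_right (m := 1) (by norm_num)).differentiableAt one_ne_zero
    have := (hd.hasFDerivAt.comp_hasDerivAt_of_eq 0 (hline 0) (by simp)).clm_apply
      (hasDerivAt_const (0 : ℝ) a)
    simpa using this
  have hmax : IsLocalMax (fun t : ℝ => u (w + t • a)) 0 := by
    have h0 : IsLocalMax u (w + (0 : ℝ) • a) := by simpa using h
    exact h0.comp_continuous (f := u) (g := fun s : ℝ => w + s • a) (hline 0).continuousAt
  have hcont : ContinuousAt (fun t : ℝ => u (w + t • a)) 0 := by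
    refine ContinuousAt.comp ?_ (hline 0).continuousAt
    simpa using hu.continuousAt
  rw [← hsecond.deriv, ← hderiv.deriv_eq]
  exact hmax.deriv_deriv_nonpos hcont

section Laplacian

variable {E : Type*} [NormedAddCommGroup E] [InnerProductSpace ℝ E] [FiniteDimensional ℝ E]

theorem IsLocalMax.laplacian_nonpos {u : E → ℝ} {w : E} (h : IsLocalMax u w)
    (hu : ContDiffAt ℝ 2 u w) : Δ u w ≤ 0 := by
  rw [laplacian_eq_iteratedFDeriv_stdOrthonormalBasis]
  refine Finset.sum_nonpos fun i _ => ?_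
  rw [iteratedFDeriv_two_apply]
  exact h.fderiv_fderiv_apply_self_nonpos hu _

theorem laplacian_norm_sub_sq (c x : E) :
    Δ (fun y => ‖y - c‖ ^ 2) x = 2 * Module.finrank ℝ E := by
  have hfd : fderiv ℝ (fun y => ‖y - c‖ ^ 2) = fun y => 2 • innerSL ℝ (y - c) := by
    funext y
    simpa using ((hasFDerivAt_id y).sub_const c).norm_sq.fderiv
  have hsd : fderiv ℝ (fun y : E => 2 • innerSL ℝ (y - c)) x = 2 • innerSL ℝ := by
    have := (((innerSL ℝ : E →L[ℝ] E →L[ℝ] ℝ).hasFDerivAt (x := x - c)).comp x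
      ((hasFDerivAt_id x).sub_const c)).const_smul (2 : ℕ)
    exact this.fderiv
  have hunit : ∀ i, innerSL ℝ (stdOrthonormalBasis ℝ E i) (stdOrthonormalBasis ℝ E i) = 1 :=
    fun i => by simp [innerSL_apply_apply]
  rw [laplacian_eq_iteratedFDeriv_stdOrthonormalBasis]
  simp only [iteratedFDeriv_two_apply, hfd, hsd]
  simp [hunit, mul_comm]

theorem exists_isLocalMax_add_norm_sub_sq [Nontrivial E] {u : E → ℝ} {x₀ : E} {r : ℝ}
    (hr : 0 < r) (hu : ContinuousOn u (closedBall x₀ r))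
    (hsphere : ∀ y ∈ sphere x₀ r, u y < u x₀) :
    ∃ ε > 0, ∃ q ∈ ball x₀ r, IsLocalMax (fun x => u x + ε * ‖x - x₀‖ ^ 2) q := by
  obtain ⟨y₁, hy₁, hy₁max⟩ := (isCompact_sphere x₀ r).exists_isMaxOn
    (NormedSpace.sphere_nonempty.2 hr.le) (hu.mono sphere_subset_closedBall)
  -- `ε` is chosen so that the perturbation lifts the sphere only halfway up to `u x₀`
  set ε := (u x₀ - u y₁) / (2 * r ^ 2) with hε_def
  have hε : 0 < ε := div_pos (sub_pos.2 (hsphere y₁ hy₁)) (by positivity)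
  have hεr : ε * r ^ 2 = (u x₀ - u y₁) / 2 := by
    rw [hε_def]
    field_simp
  obtain ⟨q, hq, hqmax⟩ := (isCompact_closedBall x₀ r).exists_isMaxOn
    (f := fun x => u x + ε * ‖x - x₀‖ ^ 2) ⟨x₀, mem_closedBall_self hr.le⟩ (by fun_prop)
  have hq_ball : q ∈ ball x₀ r := by
    refine mem_ball.2 ((mem_closedBall.1 hq).lt_of_ne fun hqr => ?_)
    have h₁ : u q ≤ u y₁ := hy₁max (mem_sphere.2 hqr)
    have h₂ : u x₀ + ε * ‖x₀ - x₀‖ ^ 2 ≤ u q + ε * ‖q - x₀‖ ^ 2 :=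
      hqmax (mem_closedBall_self hr.le)
    rw [sub_self, norm_zero, ← dist_eq_norm, hqr, hεr] at h₂
    linarith [hsphere y₁ hy₁]
  exact ⟨ε, hε, q, hq_ball, hqmax.isLocalMax (closedBall_mem_nhds_of_mem hq_ball)⟩

theorem not_isLocalMax_of_laplacian_pos [Nontrivial E] {u : E → ℝ} {x₀ : E}
    (hu : ∀ᶠ x in 𝓝 x₀, ContDiffAt ℝ 2 u x) (hnonneg : ∀ᶠ x in 𝓝 x₀, 0 ≤ Δ u x)
    (hpos : ∀ᶠ x in 𝓝[≠] x₀, 0 < Δ u x) : ¬ IsLocalMax u x₀ := by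
  intro hmax
  obtain ⟨R, hR, hball⟩ := Metric.eventually_nhds_iff_ball.1
    (((hu.and hnonneg).and (eventually_nhdsWithin_iff.1 hpos)).and hmax)
  have hC2 : ∀ y ∈ ball x₀ R, ContDiffAt ℝ 2 u y := fun y hy => (hball y hy).1.1.1
  have hΔnonneg : ∀ y ∈ ball x₀ R, 0 ≤ Δ u y := fun y hy => (hball y hy).1.1.2
  have hΔpos : ∀ y ∈ ball x₀ R, y ≠ x₀ → 0 < Δ u y := fun y hy => (hball y hy).1.2
  have hle : ∀ y ∈ ball x₀ R, u y ≤ u x₀ := fun y hy => (hball y hy).2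
  have hsphere : ∀ y ∈ sphere x₀ (R / 2), u y < u x₀ := by
    intro y hy
    have hyR : y ∈ ball x₀ R := by
      rw [mem_ball, mem_sphere.1 hy]
      linarith
    refine (hle y hyR).lt_of_ne fun hyx => ?_
    have hymax : IsLocalMax u y :=
      Filter.mem_of_superset (isOpen_ball.mem_nhds hyR) fun z hz => hyx ▸ hle z hz
    have hne : y ≠ x₀ := ne_of_mem_sphere hy (by linarith)
    exact (hymax.laplacian_nonpos (hC2 y hyR)).not_gt (hΔpos y hyR hne)
  have hcont : ContinuousOn u (closedBall x₀ (R / 2)) := fun y hy =>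
    (hC2 y (closedBall_subset_ball (by linarith) hy)).continuousAt.continuousWithinAt
  obtain ⟨ε, hε, q, hq, hqmax⟩ := exists_isLocalMax_add_norm_sub_sq (half_pos hR) hcont hsphere
  have hqR : q ∈ ball x₀ R := ball_subset_ball (by linarith) hq
  have hsq : ContDiffAt ℝ 2 (fun x => ‖x - x₀‖ ^ 2) q :=
    ((contDiff_norm_sq ℝ).comp (contDiff_id.sub contDiff_const)).contDiffAt
  have hεsq : ContDiffAt ℝ 2 (ε • fun x => ‖x - x₀‖ ^ 2) q := hsq.const_smul ε
  have hΔ : Δ (u + ε • fun x => ‖x - x₀‖ ^ 2) q ≤ 0 :=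
    hqmax.laplacian_nonpos ((hC2 q hqR).add hεsq)
  rw [(hC2 q hqR).laplacian_add hεsq, laplacian_smul ε hsq, laplacian_norm_sub_sq,
    smul_eq_mul] at hΔ
  have hdim : (0 : ℝ) < Module.finrank ℝ E := by exact_mod_cast Module.finrank_pos
  nlinarith [hΔnonneg q hqR, mul_pos hε hdim]

end Laplacian

section Holomorphic

variable {F : Type*} [NormedAddCommGroup F] [NormedSpace ℂ F]

theorem DifferentiableAt.fderiv_real_apply {f : ℂ → F} {w : ℂ} (hf : DifferentiableAt ℂ f w)
    (a : ℂ) : fderiv ℝ f w a = a • deriv f w := by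
  rw [hf.fderiv_restrictScalars ℝ, ContinuousLinearMap.coe_restrictScalars',
    ← toSpanSingleton_deriv, ContinuousLinearMap.toSpanSingleton_apply]

variable [CompleteSpace F]

theorem fderiv_fderiv_comp_apply_self {ρ : F → ℝ} {f : ℂ → F} {z : ℂ} (hf : AnalyticAt ℂ f z)
    (hρ : ContDiffAt ℝ 2 ρ (f z)) (a : ℂ) :
    fderiv ℝ (fderiv ℝ (ρ ∘ f)) z a a =
      fderiv ℝ (fderiv ℝ ρ) (f z) (a • deriv f z) (a • deriv f z) +
        fderiv ℝ ρ (f z) ((a * a) • deriv (deriv f) z) := by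
  have hg : ContDiffAt ℝ 2 (ρ ∘ f) z := hρ.comp z (hf.contDiffAt.restrict_scalars ℝ)
  have hg' : DifferentiableAt ℝ (fderiv ℝ (ρ ∘ f)) z :=
    (hg.fderiv_right (m := 1) (by norm_num)).differentiableAt one_ne_zero
  have hfirst : (fun w => fderiv ℝ (ρ ∘ f) w a) =ᶠ[𝓝 z]
      fun w => fderiv ℝ ρ (f w) (a • deriv f w) := by
    filter_upwards [hf.eventually_analyticAt,
      hf.continuousAt.eventually (hρ.eventually (by simp))] with w hfw hρw
    rw [fderiv_comp w (hρw.differentiableAt (by simp))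
      (hfw.differentiableAt.restrictScalars ℝ), ContinuousLinearMap.comp_apply,
      hfw.differentiableAt.fderiv_real_apply]
  have hρ' : HasFDerivAt (fun w => fderiv ℝ ρ (f w))
      ((fderiv ℝ (fderiv ℝ ρ) (f z)).comp (fderiv ℝ f z)) z :=
    ((hρ.fderiv_right (m := 1) (by norm_num)).differentiableAt one_ne_zero).hasFDerivAt.comp z
      (hf.differentiableAt.restrictScalars ℝ).hasFDerivAt
  have hf' : HasFDerivAt (fun w => a • deriv f w) (a • fderiv ℝ (deriv f) z) z :=
    (hf.deriv.differentiableAt.restrictScalars ℝ).hasFDerivAt.const_smul a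
  calc fderiv ℝ (fderiv ℝ (ρ ∘ f)) z a a = fderiv ℝ (fun w => fderiv ℝ (ρ ∘ f) w a) z a := by
        simp [fderiv_clm_apply hg' (differentiableAt_const a)]
    _ = _ := by
        rw [hfirst.fderiv_eq, (hρ'.clm_apply hf').fderiv]
        simp [hf.differentiableAt.fderiv_real_apply, hf.deriv.differentiableAt.fderiv_real_apply,
          smul_smul, add_comm]

theorem laplacian_comp_eq_laplacian_comp_line {ρ : F → ℝ} {f : ℂ → F} {z : ℂ}
    (hf : AnalyticAt ℂ f z) (hρ : ContDiffAt ℝ 2 ρ (f z)) :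
    Δ (ρ ∘ f) z = Δ (fun t : ℂ => ρ (f z + t • deriv f z)) 0 := by
  set ℓ : ℂ → F := fun t => f z + t • deriv f z
  have hℓ : ∀ t, HasDerivAt ℓ (deriv f z) t := fun t => by
    simpa [ℓ] using ((hasDerivAt_id t).smul_const (deriv f z)).const_add (f z)
  have hℓ' : deriv ℓ = fun _ => deriv f z := funext fun t => (hℓ t).deriv
  have hℓ_an : AnalyticAt ℂ ℓ 0 := by fun_prop
  have hρℓ : ContDiffAt ℝ 2 ρ (ℓ 0) := by simpa [ℓ] using hρ
  -- the second-order terms `(a * a) • f''(z)` cancel because `1 * 1 + I * I = 0`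
  have hI : fderiv ℝ ρ (f z) ((I * I) • deriv (deriv f) z) =
      - fderiv ℝ ρ (f z) ((1 * 1 : ℂ) • deriv (deriv f) z) := by
    simp
  change Δ (ρ ∘ f) z = Δ (ρ ∘ ℓ) 0
  simp only [laplacian_eq_iteratedFDeriv_complexPlane, iteratedFDeriv_two_apply,
    Matrix.cons_val_zero, Matrix.cons_val_one, fderiv_fderiv_comp_apply_self hf hρ,
    fderiv_fderiv_comp_apply_self hℓ_an hρℓ, hI, hℓ']
  simp [ℓ]
  abel

end Holomorphic

theorem eventually_deriv_ne_zero_of_nonconstant {F : Type*} [NormedAddCommGroup F]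
    [NormedSpace ℂ F] [CompleteSpace F] {f : ℂ → F} {s : Set ℂ} (hf : DifferentiableOn ℂ f s)
    (hs : IsOpen s) (hs' : IsPreconnected s) (hnc : ¬ ∃ v, ∀ z ∈ s, f z = v) {z : ℂ}
    (hz : z ∈ s) : ∀ᶠ w in 𝓝[≠] z, deriv f w ≠ 0 := by
  have han := hf.analyticOnNhd hs
  refine (han.deriv z hz).eventually_eq_zero_or_eventually_ne_zero.resolve_left fun h => hnc ?_
  exact hs.exists_is_const_of_deriv_eq_zero hs' hf
    (han.deriv.eqOn_zero_of_preconnected_of_eventuallyEq_zero hs' hz h)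

theorem IsPreconnected.mapsTo_of_closure {X Y : Type*} [TopologicalSpace X] [TopologicalSpace Y]
    {s : Set X} {V : Set Y} {f : X → Y} (hs : IsPreconnected s) (hs_open : IsOpen s)
    (hf : ContinuousOn f s) (hV : IsOpen V) (hne : ∃ x ∈ s, f x ∈ V)
    (h : ∀ x ∈ s, f x ∈ closure V → f x ∈ V) : MapsTo f s V := by
  obtain ⟨x₀, hx₀, hfx₀⟩ := hne
  refine fun x hx => (hs.subset_of_closure_inter_subset (hf.isOpen_inter_preimage hs_open hV)
    ⟨x₀, hx₀, hx₀, hfx₀⟩ ?_ hx).2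
  rintro y ⟨hy_cl, hy⟩
  exact ⟨hy, h y hy (((hf y hy).mono inter_subset_left).mem_closure hy_cl fun _ h => h.2)⟩

theorem lap_eq_laplacian (g : ℂ → ℝ) (w : ℂ) : lap g w = Δ g w := by
  rw [laplacian_eq_iteratedFDeriv_complexPlane]
  rfl

namespace StrictPSHOn

variable {ρ : ℂ × ℂ → ℝ} {U : Set (ℂ × ℂ)}

theorem contDiffAt (hρ : StrictPSHOn ρ U) (hU : IsOpen U) {x : ℂ × ℂ} (hx : x ∈ U) :
    ContDiffAt ℝ 2 ρ x :=
  (hρ.1.contDiffAt (hU.mem_nhds hx)).of_le (WithTop.coe_le_coe.2 le_top)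

theorem laplacian_comp_pos (hρ : StrictPSHOn ρ U) (hU : IsOpen U) {f : ℂ → ℂ × ℂ} {z : ℂ}
    (hf : AnalyticAt ℂ f z) (hz : f z ∈ U) (hf' : deriv f z ≠ 0) : 0 < Δ (ρ ∘ f) z := by
  rw [laplacian_comp_eq_laplacian_comp_line hf (hρ.contDiffAt hU hz), ← lap_eq_laplacian]
  exact hρ.2 _ hz _ hf'

theorem laplacian_comp_nonneg (hρ : StrictPSHOn ρ U) (hU : IsOpen U) {f : ℂ → ℂ × ℂ} {z : ℂ}
    (hf : AnalyticAt ℂ f z) (hz : f z ∈ U) : 0 ≤ Δ (ρ ∘ f) z := by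
  by_cases hf' : deriv f z = 0
  · simp [laplacian_comp_eq_laplacian_comp_line hf (hρ.contDiffAt hU hz), hf']
  · exact (hρ.laplacian_comp_pos hU hf hz hf').le

theorem not_isLocalMax_comp (hρ : StrictPSHOn ρ U) (hU : IsOpen U) {f : ℂ → ℂ × ℂ} {s : Set ℂ}
    (hf : DifferentiableOn ℂ f s) (hs : IsOpen s) (hs' : IsPreconnected s)
    (hnc : ¬ ∃ v, ∀ z ∈ s, f z = v) {z : ℂ} (hz : z ∈ s) (hfz : f z ∈ U) :
    ¬ IsLocalMax (ρ ∘ f) z := by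
  have han := hf.analyticOnNhd hs
  have hnear : ∀ᶠ w in 𝓝 z, w ∈ s ∧ f w ∈ U :=
    (hs.eventually_mem hz).and ((han z hz).continuousAt.preimage_mem_nhds (hU.mem_nhds hfz))
  refine not_isLocalMax_of_laplacian_pos ?_ ?_ ?_
  · filter_upwards [hnear] with w hw
    exact (hρ.contDiffAt hU hw.2).comp w ((han w hw.1).contDiffAt.restrict_scalars ℝ)
  · filter_upwards [hnear] with w hw
    exact hρ.laplacian_comp_nonneg hU (han w hw.1) hw.2
  · filter_upwards [nhdsWithin_le_nhds hnear,
      eventually_deriv_ne_zero_of_nonconstant hf hs hs' hnc hz] with w hw hw'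
    exact hρ.laplacian_comp_pos hU (han w hw.1) hw.2 hw'

end StrictPSHOn

theorem ContinuousOn.nonpos_of_neg_on_Ico {g : ℝ → ℝ} {a b : ℝ} (hab : a < b)
    (hg : ContinuousOn g (Icc a b)) (hneg : ∀ s ∈ Ico a b, g s < 0) : g b ≤ 0 :=
  ContinuousWithinAt.closure_le (by simp [closure_Ico hab.ne, hab.le])
    ((hg b (right_mem_Icc.2 hab.le)).mono Ico_subset_Icc_self) continuousWithinAt_const
    fun s hs => (hneg s hs).le

theorem IsStrictPseudoconvexWith.neg_of_mem {Ω : Set (ℂ × ℂ)} {ρ : ℂ × ℂ → ℝ}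
    (h : IsStrictPseudoconvexWith Ω ρ) {x : ℂ × ℂ} (hx : x ∈ Ω) : ρ x < 0 := by
  obtain ⟨-, -, -, U, -, -, -, rfl⟩ := h
  exact hx.2

/-- **Disk trapping lemma.** If a continuous family of holomorphic disks `D_s = φ_s(Δ)`
has boundaries in `∂Ω_s` for a continuous family of strictly pseudoconvex domains `Ω_s`,
and `D_s ⊆ Ω_s` for all `s ∈ [0,1)`, then also `D₁ ⊆ Ω₁`. -/
theorem disk_trapping (Ω : ℝ → Set (ℂ × ℂ)) (ρ : ℝ → ℂ × ℂ → ℝ)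
    (hΩ : ∀ s ∈ Icc (0 : ℝ) 1, IsStrictPseudoconvexWith (Ω s) (ρ s))
    (hρcont : ContinuousOn (fun q : ℝ × (ℂ × ℂ) => ρ q.1 q.2) (Icc (0 : ℝ) 1 ×ˢ univ))
    (φ : ℝ → ℂ → ℂ × ℂ)
    (hφcont : ContinuousOn (fun q : ℝ × ℂ => φ q.1 q.2)
      (Icc (0 : ℝ) 1 ×ˢ closedBall (0 : ℂ) 1))
    (hφhol : ∀ s ∈ Icc (0 : ℝ) 1, DifferentiableOn ℂ (φ s) (ball (0 : ℂ) 1))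
    (hφnc : ∀ s ∈ Icc (0 : ℝ) 1, ¬ ∃ v : ℂ × ℂ, ∀ z ∈ ball (0 : ℂ) 1, φ s z = v)
    (hbd : ∀ s ∈ Icc (0 : ℝ) 1, φ s '' sphere (0 : ℂ) 1 ⊆ frontier (Ω s))
    (hin : ∀ s ∈ Ico (0 : ℝ) 1, φ s '' ball (0 : ℂ) 1 ⊆ Ω s) :
    φ 1 '' ball (0 : ℂ) 1 ⊆ Ω 1 := by
  have h1 : (1 : ℝ) ∈ Icc (0 : ℝ) 1 := right_mem_Icc.2 zero_le_one
  obtain ⟨hΩopen, -, -, U, hU, hclU, hρ, hΩeq⟩ := hΩ 1 h1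
  have hfc : ContinuousOn (φ 1) (closedBall 0 1) :=
    hφcont.comp (f := fun z => ((1 : ℝ), z)) (Continuous.continuousOn (by fun_prop))
      fun z hz => ⟨h1, hz⟩
  have hle : ∀ z ∈ ball (0 : ℂ) 1, ρ 1 (φ 1 z) ≤ 0 := fun z hz =>
    ContinuousOn.nonpos_of_neg_on_Ico (g := fun s => ρ s (φ s z)) zero_lt_one
      (hρcont.comp (continuousOn_id.prodMk (hφcont.comp (f := fun s => (s, z))
        (Continuous.continuousOn (by fun_prop)) fun s hs => ⟨hs, ball_subset_closedBall hz⟩))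
        fun s hs => ⟨hs, mem_univ _⟩)
      fun s hs => (hΩ s (Ico_subset_Icc_self hs)).neg_of_mem (hin s hs (mem_image_of_mem _ hz))
  have hlt : ∀ z ∈ ball (0 : ℂ) 1, φ 1 z ∈ U → ρ 1 (φ 1 z) < 0 := fun z hz hzU =>
    (hle z hz).lt_of_ne fun h0 => hρ.not_isLocalMax_comp hU (hφhol 1 h1) isOpen_ball
      (convex_ball 0 1).isPreconnected (hφnc 1 h1) hz hzU
      (Filter.mem_of_superset (isOpen_ball.mem_nhds hz) fun w hw => by simpa [h0] using hle w hw)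
  obtain ⟨z₀, hz₀, hz₀U⟩ : ∃ z ∈ ball (0 : ℂ) 1, φ 1 z ∈ U := by
    have h1s : (1 : ℂ) ∈ sphere (0 : ℂ) 1 := by simp
    have hU1 : φ 1 1 ∈ U := hclU (frontier_subset_closure (hbd 1 h1 (mem_image_of_mem _ h1s)))
    have hcl : φ 1 1 ∈ closure (φ 1 '' ball 0 1) :=
      ((hfc 1 (sphere_subset_closedBall h1s)).mono ball_subset_closedBall).mem_closure_image
        (by simp [closure_ball])
    obtain ⟨_, hU', z, hz, rfl⟩ := mem_closure_iff.1 hcl U hU hU1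
    exact ⟨z, hz, hU'⟩
  refine mapsTo_iff_image_subset.1 ((convex_ball 0 1).isPreconnected.mapsTo_of_closure
    isOpen_ball (hfc.mono ball_subset_closedBall) hΩopen ⟨z₀, hz₀, ?_⟩ fun z hz hcl => ?_)
  · rw [hΩeq]
    exact ⟨hz₀U, hlt z₀ hz₀ hz₀U⟩
  · rw [hΩeq]
    exact ⟨hclU hcl, hlt z hz (hclU hcl)⟩
end
end

section
/- Let F : S¹ × ℂ → ℝ be a smooth defining function of a smooth family of graphical tori, with ∂F/∂w (λ,w) ≠ 0 for w ≠ 0. Let γ : S¹ → ℂ∖{0} be a continuous curve whose winding number around 0 is equal to zero. Then the winding number around 0 of the curve λ ↦ ∂F/∂w (λ, γ(λ)), λ ∈ S¹, is also equal to zero. -/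
/-! Put `Φ(t, w) = ∂F/∂w(e^{it}, w)`. Since `F = |w|²` near `w = 0`, `Φ(t, r) = r̄ = r` for small
`r > 0`, and `Φ(t, w) ≠ 0` for `w ≠ 0`. As `γ` has winding number zero, it contracts onto `r` inside
`ℂ ∖ {0}`, so `Φ(·, γ)` is homotopic to the constant `r` through nonvanishing periodic curves. Winding number zero is invariant under
such homotopies: a curve closer to a nonvanishing curve `d` than `|d|` has the same winding number,
and by compactness of a period nearby curves of the homotopy are that close. -/

open Set Metric Complex

noncomputable section

/-- The closed curve `c` (periodic of period `2π`) has winding number `1` around `0`: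
there is a continuous lift of the argument increasing by `2π` over one period. -/
def WindingOne (c : ℝ → ℂ) : Prop :=
  ∃ θ : ℝ → ℝ, Continuous θ ∧
    (∀ t, c t = (‖c t‖ : ℂ) * Complex.exp ((θ t : ℂ) * Complex.I)) ∧
    θ (2 * Real.pi) = θ 0 + 2 * Real.pi

/-- `c : ℝ → ℂ` is a smooth simple closed curve (parametrized with period `2π`). -/
def IsSCC (c : ℝ → ℂ) : Prop :=
  ContDiff ℝ (⊤ : ℕ∞) c ∧ (∀ t, c (t + 2 * Real.pi) = c t) ∧
    Set.InjOn c (Ico 0 (2 * Real.pi)) ∧ ∀ t, deriv c t ≠ 0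

/-- `Γ ⊆ S¹ × ℂ` is a graphical torus: every vertical slice `C_λ` is a smooth simple
closed curve in `ℂ ∖ {0}` with winding number `1` around `0`. -/
def IsGraphicalTorus (Γ : Set (ℂ × ℂ)) : Prop :=
  (∀ p ∈ Γ, p.1 ∈ sphere (0 : ℂ) 1) ∧
  ∀ l ∈ sphere (0 : ℂ) 1, ∃ c : ℝ → ℂ,
    IsSCC c ∧ (∀ t, c t ≠ 0) ∧ WindingOne c ∧ Set.range c = {w : ℂ | (l, w) ∈ Γ}

/-- `g` is continuous on the closed unit disk and holomorphic on the open unit disk,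
hence defines a holomorphic disk `{(λ, g λ) : λ ∈ Δ}`. -/
def HolDisk (g : ℂ → ℂ) : Prop :=
  ContinuousOn g (closedBall (0 : ℂ) 1) ∧ DifferentiableOn ℂ g (ball (0 : ℂ) 1)

/-- The trace `{(λ, g λ) : λ ∈ S¹}` of the disk defined by `g` lies in `Γ`. -/
def DiskTraceIn (g : ℂ → ℂ) (Γ : Set (ℂ × ℂ)) : Prop :=
  ∀ l ∈ sphere (0 : ℂ) 1, (l, g l) ∈ Γ

/-- The Wirtinger derivative `∂f/∂w = ½(∂f/∂x − i ∂f/∂y)` of `f : ℂ → ℝ`, as a complex number. -/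
def wirt (f : ℂ → ℝ) (w : ℂ) : ℂ :=
  (((fderiv ℝ f w 1 : ℝ) : ℂ) - Complex.I * ((fderiv ℝ f w Complex.I : ℝ) : ℂ)) / 2

/-- The torus `Γ^t = {(λ, w) : λ ∈ S¹, F(λ,w) = t}` cut out by the defining function `F`. -/
def TorusOf (F : ℂ → ℂ → ℝ) (t : ℝ) : Set (ℂ × ℂ) :=
  {p : ℂ × ℂ | p.1 ∈ sphere (0 : ℂ) 1 ∧ F p.1 p.2 = t}

/-- `F : S¹ × ℂ → ℝ` is a smooth defining function of a smooth family of graphical tori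
`Γ^t = F⁻¹(t)`, `t > 0`: each slice level set is a smooth simple closed curve of winding
number `1` around `0`, the level sets foliate `ℂ ∖ {0}` for each fixed `λ ∈ S¹`,
`F(λ,w) = |w|²` near `w = 0`, and `∂F/∂w ≠ 0` for `w ≠ 0`. -/
def IsSmoothTorusFamily (F : ℂ → ℂ → ℝ) : Prop :=
  ContDiffOn ℝ (⊤ : ℕ∞) (fun p : ℂ × ℂ => F p.1 p.2) (sphere (0 : ℂ) 1 ×ˢ univ) ∧
  (∀ l ∈ sphere (0 : ℂ) 1, ContDiff ℝ (⊤ : ℕ∞) (F l)) ∧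
  (∃ ε : ℝ, 0 < ε ∧ ∀ l ∈ sphere (0 : ℂ) 1, ∀ w : ℂ,
      Complex.normSq w < ε → F l w = Complex.normSq w) ∧
  (∀ l ∈ sphere (0 : ℂ) 1, ∀ w : ℂ, w ≠ 0 → 0 < F l w) ∧
  (∀ l ∈ sphere (0 : ℂ) 1, ∀ w : ℂ, w ≠ 0 → wirt (F l) w ≠ 0) ∧
  (∀ l ∈ sphere (0 : ℂ) 1, ∀ t : ℝ, 0 < t → ∃ c : ℝ → ℂ,
      IsSCC c ∧ (∀ s, c s ≠ 0) ∧ WindingOne c ∧ Set.range c = {w : ℂ | F l w = t})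

/-- The closed curve `c` has winding number `0` around `0`. -/
def WindingZero (c : ℝ → ℂ) : Prop :=
  ∃ θ : ℝ → ℝ, Continuous θ ∧
    (∀ t, c t = (‖c t‖ : ℂ) * Complex.exp ((θ t : ℂ) * Complex.I)) ∧
    θ (2 * Real.pi) = θ 0

open Function Filter Topology
open scoped Real ComplexConjugate

lemma sub_mem_zmultiples_of_exp_mul_I_eq {x y : ℝ} (h : exp (x * I) = exp (y * I)) :
    x - y ∈ AddSubgroup.zmultiples (2 * π) := by
  obtain ⟨m, hm⟩ := Circle.exp_eq_exp.mp (Circle.ext (by simpa only [Circle.coe_exp] using h))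
  exact ⟨m, by simp only [hm, zsmul_eq_mul]; ring⟩

/-- The jump `θ (t + 2π) - θ t` lies in the discrete set `2πℤ` and depends continuously on `t`,
so it is constant. -/
lemma periodic_of_arg_lift {c : ℝ → ℂ} {θ : ℝ → ℝ} (hcper : Periodic c (2 * π))
    (hc0 : ∀ t, c t ≠ 0) (hθc : Continuous θ) (hθ : ∀ t, c t = ‖c t‖ * exp (θ t * I))
    (hθper : θ (2 * π) = θ 0) : Periodic θ (2 * π) := by
  have hjump : ∀ t, θ (t + 2 * π) - θ t ∈ AddSubgroup.zmultiples (2 * π) := fun t =>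
    sub_mem_zmultiples_of_exp_mul_I_eq <|
      mul_left_cancel₀ (ofReal_ne_zero.mpr (norm_ne_zero_iff.mpr (hc0 t)))
        (by rw [← hθ, ← hcper t, ← hθ (t + 2 * π)])
  intro t
  have := isPreconnected_univ.constant_of_mapsTo
    (SetLike.isDiscrete_iff_discreteTopology.mpr inferInstance)
    ((hθc.comp (continuous_add_const _)).sub hθc).continuousOn (fun t _ => hjump t)
    (mem_univ t) (mem_univ 0)
  simp only [Pi.sub_apply, comp_apply, zero_add, hθper, sub_self] at this
  exact sub_eq_zero.mp this

namespace WindingZero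

lemma const {r : ℝ} (hr : 0 < r) : WindingZero fun _ => (r : ℂ) :=
  ⟨fun _ => 0, continuous_const, fun _ => by simp [abs_of_pos hr], rfl⟩

/-- Rouché-type stability: `c = d · (c / d)` with `c / d` in the right half-plane, so the
principal argument of `c / d` corrects a lift of the argument of `d` into one of `c`. -/
lemma of_norm_sub_lt {c d : ℝ → ℂ} (hc : Continuous c) (hd : Continuous d)
    (hcper : c (2 * π) = c 0) (hdper : d (2 * π) = d 0)
    (hclose : ∀ t, ‖c t - d t‖ < ‖d t‖) (hw : WindingZero d) : WindingZero c := by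
  obtain ⟨θ, hθc, hθ, hθper⟩ := hw
  have hd0 : ∀ t, d t ≠ 0 := fun t => norm_pos_iff.mp ((norm_nonneg _).trans_lt (hclose t))
  set h : ℝ → ℂ := fun t => c t / d t
  have hre : ∀ t, 0 < (h t).re := by
    intro t
    have h1 : ‖h t - 1‖ < 1 := by
      rw [show h t - 1 = (c t - d t) / d t by simp [h, sub_div, div_self (hd0 t)], norm_div,
        div_lt_one (norm_pos_iff.mpr (hd0 t))]
      exact hclose t
    have := (abs_le.mp ((h t - 1).abs_re_le_norm)).1
    simp only [sub_re, one_re] at this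
    linarith
  have hargc : Continuous fun t => (h t).arg :=
    continuous_iff_continuousAt.mpr fun t =>
      (continuousAt_arg (mem_slitPlane_iff.mpr (Or.inl (hre t)))).comp
        ((hc.div hd hd0).continuousAt)
  refine ⟨fun t => θ t + (h t).arg, hθc.add hargc, fun t => ?_, by simp [h, hθper, hcper, hdper]⟩
  have hceq : c t = d t * h t := (mul_div_cancel₀ (c t) (hd0 t)).symm
  calc c t = ((‖d t‖ : ℂ) * exp (θ t * I)) * ((‖h t‖ : ℂ) * exp ((h t).arg * I)) := by
        rw [← hθ t, norm_mul_exp_arg_mul_I, hceq]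
    _ = (‖c t‖ : ℂ) * exp (((θ t + (h t).arg : ℝ) : ℂ) * I) := by
        rw [hceq, norm_mul]
        push_cast
        rw [add_mul, exp_add]
        ring

lemma of_homotopy {H : ℝ → ℝ → ℂ} (hH : Continuous (uncurry H))
    (hper : ∀ s, Periodic (H s) (2 * π)) (hne : ∀ s ∈ Icc (0 : ℝ) 1, ∀ t, H s t ≠ 0)
    (h1 : WindingZero (H 1)) : WindingZero (H 0) := by
  have hcont : ∀ s, Continuous (H s) := fun s => hH.comp (Continuous.prodMk_right s)
  -- Within half of `‖H s‖`, so that `of_norm_sub_lt` applies in both directions.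
  have hnear : ∀ s ∈ Icc (0 : ℝ) 1, ∀ᶠ s' in 𝓝 s, ∀ t, ‖H s' t - H s t‖ < ‖H s t‖ / 2 := by
    intro s hs
    have hperiod : ∀ᶠ s' in 𝓝 s, ∀ t ∈ Icc 0 (2 * π), ‖H s' t - H s t‖ < ‖H s t‖ / 2 :=
      isCompact_Icc.eventually_forall_of_forall_eventually fun t _ =>
        ContinuousAt.eventually_lt (f := fun z : ℝ × ℝ => ‖H z.1 z.2 - H s z.2‖)
          ((hH.sub (hcont s |>.comp continuous_snd)).norm.continuousAt)
          (((hcont s |>.comp continuous_snd).norm.div_const 2).continuousAt)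
          (by simpa using hne s hs t)
    filter_upwards [hperiod] with s' hs' t
    obtain ⟨t₀, ht₀, hslice⟩ :=
      Periodic.exists_mem_Ico₀ (f := fun t s => H s t) (fun t => funext fun s => hper s t)
        Real.two_pi_pos t
    simpa only [congrFun hslice] using hs' t₀ (Ico_subset_Icc_self ht₀)
  refine (isPreconnected_Icc.induction₂ (fun a b => WindingZero (H a) ↔ WindingZero (H b))
    ?_ (fun _ _ _ _ _ _ => Iff.trans) (fun _ _ _ _ => Iff.symm)
    (right_mem_Icc.2 zero_le_one) (left_mem_Icc.2 zero_le_one)).mp h1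
  intro s hs
  filter_upwards [nhdsWithin_le_nhds (hnear s hs)] with s' hs'
  have hback : ∀ t, ‖H s t - H s' t‖ < ‖H s' t‖ := fun t => by
    have := norm_sub_norm_le (H s t) (H s t - H s' t)
    rw [sub_sub_cancel] at this
    linarith [hs' t, norm_sub_rev (H s t) (H s' t)]
  exact ⟨of_norm_sub_lt (hcont s') (hcont s) (hper s').eq (hper s).eq
      (fun t => (hs' t).trans (half_lt_self (norm_pos_iff.mpr (hne s hs t)))),
    of_norm_sub_lt (hcont s) (hcont s') (hper s).eq (hper s').eq hback⟩

/-- Contract `γ = ‖γ‖ e^{iθ}` to the constant `r` through the curves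
`((1 - s)‖γ‖ + s r) e^{i(1 - s)θ}`, which avoid `0` for `s ∈ [0, 1]` and are periodic because
`θ` is. -/
lemma map {Φ : ℝ → ℂ → ℂ} (hΦ : Continuous (uncurry Φ))
    (hΦper : ∀ w, Periodic (Φ · w) (2 * π)) (hΦne : ∀ t w, w ≠ 0 → Φ t w ≠ 0)
    {r : ℝ} (hr : 0 < r) (hΦr : WindingZero fun t => Φ t r)
    {γ : ℝ → ℂ} (hγc : Continuous γ) (hγper : Periodic γ (2 * π)) (hγ0 : ∀ t, γ t ≠ 0)
    (hγ : WindingZero γ) : WindingZero fun t => Φ t (γ t) := by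
  obtain ⟨θ, hθc, hθ, hθ2π⟩ := hγ
  have hθper := periodic_of_arg_lift hγper hγ0 hθc hθ hθ2π
  set δ : ℝ → ℝ → ℂ := fun s t =>
    (((1 - s) * ‖γ t‖ + s * r : ℝ) : ℂ) * exp (((1 - s) * θ t : ℝ) * I)
  have hδ : Continuous (uncurry δ) := by fun_prop
  have hδne : ∀ s ∈ Icc (0 : ℝ) 1, ∀ t, δ s t ≠ 0 := fun s hs t => by
    have hpos := convex_Ioi (0 : ℝ) (norm_pos_iff.mpr (hγ0 t)) hr (sub_nonneg.mpr hs.2) hs.1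
      (sub_add_cancel 1 s)
    simp only [smul_eq_mul, mem_Ioi] at hpos
    exact mul_ne_zero (ofReal_ne_zero.mpr hpos.ne') (exp_ne_zero _)
  have hδ0 : δ 0 = γ := funext fun t => by simp [δ, ← hθ]
  have hδ1 : δ 1 = fun _ => (r : ℂ) := funext fun t => by simp [δ]
  have := of_homotopy (H := fun s t => Φ t (δ s t))
    (hΦ.comp (continuous_snd.prodMk hδ))
    (fun s t => by simp only [δ, hγper t, hθper t]; exact hΦper _ t)
    (fun s hs t => hΦne t _ (hδne s hs t))
    (by simpa only [hδ1] using hΦr)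
  simpa only [hδ0] using this

end WindingZero

lemma wirt_congr {f g : ℂ → ℝ} {w : ℂ} (h : f =ᶠ[𝓝 w] g) : wirt f w = wirt g w := by
  rw [wirt, wirt, h.fderiv_eq]

lemma wirt_normSq (w : ℂ) : wirt normSq w = conj w := by
  have hsq : (normSq : ℂ → ℝ) = fun z => ‖z‖ ^ 2 := funext normSq_eq_norm_sq
  rw [wirt, hsq, fderiv_norm_sq_apply]
  apply Complex.ext <;> simp [Complex.inner, neg_div]

lemma continuous_wirt {E : Type*} [NormedAddCommGroup E] [NormedSpace ℝ E] {f : E → ℂ → ℝ}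
    (hf : ContDiff ℝ 1 (uncurry f)) : Continuous fun p : E × ℂ => wirt (f p.1) p.2 := by
  have hfd : Continuous fun p : E × ℂ => fderiv ℝ (f p.1) p.2 :=
    (ContDiff.fderiv (f := fun p : E × ℂ => f p.1) (m := 1) (n := 0)
      (hf.comp (contDiff_fst.fst.prodMk contDiff_snd)) contDiff_snd
      (by norm_num)).continuous
  unfold wirt
  fun_prop

/-- **Winding number lemma.** If `F` is a smooth defining function of a family of graphical
tori and `γ : S¹ → ℂ ∖ {0}` (parametrized by `λ = e^{it}`) has winding number `0` around `0`,
then the curve `λ ↦ ∂F/∂w(λ, γ(λ))` also has winding number `0` around `0`. -/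
theorem winding_number_of_Fw (F : ℂ → ℂ → ℝ) (hF : IsSmoothTorusFamily F)
    (γ : ℝ → ℂ) (hγc : Continuous γ) (hγper : ∀ t, γ (t + 2 * Real.pi) = γ t)
    (hγnz : ∀ t, γ t ≠ 0) (hγ0 : WindingZero γ) :
    WindingZero (fun t => wirt (F (Complex.exp ((t : ℂ) * Complex.I))) (γ t)) := by
  obtain ⟨hFsmooth, -, ⟨ε, hε, hFnear0⟩, -, hFwirt, -⟩ := hF
  have hS : ∀ t : ℝ, exp (t * I) ∈ sphere (0 : ℂ) 1 := fun t => by simp [norm_exp_ofReal_mul_I]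
  set r := √(ε / 2)
  have hr : 0 < r := Real.sqrt_pos.mpr (half_pos hε)
  have hwirt_r : ∀ t : ℝ, wirt (F (exp (t * I))) r = r := fun t => by
    have hnear : F (exp (t * I)) =ᶠ[𝓝 (r : ℂ)] normSq := by
      have hr2 : normSq r < ε := by
        rw [normSq_ofReal, Real.mul_self_sqrt (by positivity)]
        linarith
      filter_upwards [(isOpen_lt continuous_normSq continuous_const).mem_nhds hr2] with w hw
        using hFnear0 _ (hS t) w hw
    rw [wirt_congr hnear, wirt_normSq, conj_ofReal]
  have hsmooth : ContDiff ℝ 1 (uncurry fun (t : ℝ) w => F (exp (t * I)) w) :=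
    (hFsmooth.comp_contDiff (f := fun p : ℝ × ℂ => (exp (p.1 * I), p.2))
      ((contDiff_exp.comp ((ofRealCLM.contDiff.comp contDiff_fst).mul contDiff_const)).prodMk
        contDiff_snd) fun p => ⟨hS p.1, mem_univ _⟩).of_le (by norm_num)
  refine WindingZero.map (Φ := fun t w => wirt (F (exp (t * I))) w) ?_ ?_
    (fun t w hw => hFwirt _ (hS t) w hw) hr ?_ hγc hγper hγnz hγ0
  · exact continuous_wirt hsmooth
  · exact fun w t => congrArg (fun l => wirt (F l) w) (by push_cast; exact exp_mul_I_periodic _)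
  · simpa only [hwirt_r] using WindingZero.const hr
end
end
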